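/- Let φ : Δ^{0̂} → Δ be a group epimorphism. If H ≤ Δ contains a conjugate of R₀, R₁ or R₂, then H φ⁻¹ contains a conjugate in Δ^{0̂} of one of R₁, R₂, R₁^{R₀}, R₂^{R₀}. (If the hypermap φ(H) has no boundary, then H has no boundary.) -/

import Mathlib

/-!
Every element of `Δ = C₂ * C₂ * C₂` has a unique reduced word, so an element of order at most
two is a reduced palindrome, i.e. `1` or a conjugate of some `R k`; the parity of the number of
letters `R i` then tells whether `k = i`. As `φ` is onto, this parity composed with `φ` is a
nontrivial character of `Δ^{0̂}`, which is generated by the four involutions `gens`; so `φ s` is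
a conjugate `g⁻¹ R i g` for some `s ∈ gens`, and conjugating `s` by a preimage of `g⁻¹ c` lands
in `H φ⁻¹` whenever `c⁻¹ R i c ∈ H`.
-/

/-- The relations making each generator an involution. -/
def rels : Set (FreeGroup (Fin 3)) := {x | ∃ i, x = (FreeGroup.of i) ^ 2}

/-- Δ = C₂ * C₂ * C₂. -/
abbrev Δ := PresentedGroup rels

/-- The generators R₀, R₁, R₂ of Δ. -/
def R (i : Fin 3) : Δ := PresentedGroup.of i

/-- Δ^{0̂}, the normal closure of {R₁, R₂}, an index-2 subgroup of Δ. -/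
def Δ0 : Subgroup Δ := Subgroup.normalClosure {R 1, R 2}

/-- Δ⁺, the even-word subgroup of Δ. -/
def Δplus : Subgroup Δ := Subgroup.closure {R 1 * R 2, R 2 * R 0, R 0 * R 1}

/-- The preimage H φ⁻¹, regarded as a subgroup of Δ. -/
def preim (φ : Δ0 →* Δ) (H : Subgroup Δ) : Subgroup Δ :=
  (H.comap φ).map Δ0.subtype

/-- The kernel of φ, regarded as a subgroup of Δ. -/
def kerS (φ : Δ0 →* Δ) : Subgroup Δ := φ.ker.map Δ0.subtype

/-- The conjugate K^g = g⁻¹ K g. -/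
def conjS (K : Subgroup Δ) (g : Δ) : Subgroup Δ :=
  K.map (MulAut.conj g⁻¹).toMonoidHom

/-- The four involutions R₁, R₂, R₁^{R₀}, R₂^{R₀} generating Δ^{0̂}. -/
def gens : Set Δ := {R 1, R 2, (R 0)⁻¹ * R 1 * R 0, (R 0)⁻¹ * R 2 * R 0}

open Subgroup

lemma R_mul_self (i : Fin 3) : R i * R i = 1 := by
  rw [← sq]
  exact (map_pow _ _ 2).symm.trans (PresentedGroup.one_of_mem ⟨i, rfl⟩)

@[simp] lemma R_inv (i : Fin 3) : (R i)⁻¹ = R i :=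
  inv_eq_of_mul_eq_one_right (R_mul_self i)

@[simp] lemma R_mul_R_mul (i : Fin 3) (x : Δ) : R i * (R i * x) = x := by
  rw [← mul_assoc, R_mul_self, one_mul]

abbrev Reduced (l : List (Fin 3)) : Prop := l.IsChain (· ≠ ·)

def word (l : List (Fin 3)) : Δ := (l.map R).prod

@[simp] lemma word_nil : word [] = 1 := rfl

@[simp] lemma word_cons (a : Fin 3) (l : List (Fin 3)) : word (a :: l) = R a * word l := by
  simp [word]

@[simp] lemma word_append (l₁ l₂ : List (Fin 3)) : word (l₁ ++ l₂) = word l₁ * word l₂ := by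
  simp [word]

def consReduce (a : Fin 3) : List (Fin 3) → List (Fin 3)
  | [] => [a]
  | b :: t => if a = b then t else a :: b :: t

lemma reduced_consReduce (a : Fin 3) {l : List (Fin 3)} (hl : Reduced l) :
    Reduced (consReduce a l) := by
  cases l with
  | nil => exact List.isChain_singleton a
  | cons b t =>
    by_cases hab : a = b
    · simpa [consReduce, hab] using hl.tail
    · simpa [consReduce, hab] using List.isChain_cons_cons.2 ⟨hab, hl⟩

lemma consReduce_of_reduced_cons {a : Fin 3} {l : List (Fin 3)} (hl : Reduced (a :: l)) :
    consReduce a l = a :: l := by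
  cases l with
  | nil => rfl
  | cons b t => simp [consReduce, (List.isChain_cons_cons.1 hl).1]

lemma consReduce_consReduce (a : Fin 3) {l : List (Fin 3)} (hl : Reduced l) :
    consReduce a (consReduce a l) = l := by
  cases l with
  | nil => simp [consReduce]
  | cons b t =>
    by_cases hab : a = b
    · subst hab
      simpa [consReduce] using consReduce_of_reduced_cons hl
    · simp [consReduce, hab]

lemma R_mul_word (a : Fin 3) (l : List (Fin 3)) : R a * word l = word (consReduce a l) := by
  cases l with
  | nil => simp [consReduce]
  | cons b t =>
    by_cases hab : a = b
    · subst hab; simp [consReduce]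
    · simp [consReduce, hab]

abbrev ReducedWord : Type := {l : List (Fin 3) // Reduced l}

def consReducePerm (a : Fin 3) : Equiv.Perm ReducedWord :=
  Function.Involutive.toPerm (fun l => ⟨consReduce a l.1, reduced_consReduce a l.2⟩)
    fun l => Subtype.ext (consReduce_consReduce a l.2)

def wordAction : Δ →* Equiv.Perm ReducedWord :=
  PresentedGroup.toGroup (f := consReducePerm) <| by
    rintro _ ⟨a, rfl⟩
    rw [map_pow, FreeGroup.lift_apply_of, sq]
    exact Equiv.Perm.ext fun l => Subtype.ext (consReduce_consReduce a l.2)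

lemma wordAction_R (a : Fin 3) : wordAction (R a) = consReducePerm a :=
  PresentedGroup.toGroup.of _

lemma wordAction_word_nil {l : List (Fin 3)} (hl : Reduced l) :
    wordAction (word l) ⟨[], List.isChain_nil⟩ = ⟨l, hl⟩ := by
  induction l with
  | nil => rfl
  | cons a t ih =>
    rw [word_cons, map_mul, Equiv.Perm.mul_apply, ih hl.tail, wordAction_R]
    exact Subtype.ext (consReduce_of_reduced_cons hl)

lemma eq_nil_of_word_eq_one {l : List (Fin 3)} (hl : Reduced l) (h : word l = 1) : l = [] := by
  have := wordAction_word_nil hl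
  rw [h, map_one] at this
  exact congrArg Subtype.val this.symm

lemma exists_reduced_word (g : Δ) : ∃ l, Reduced l ∧ word l = g := by
  have hg : g ∈ closure (Set.range R) := by
    rw [show Set.range R = Set.range PresentedGroup.of from rfl, PresentedGroup.closure_range_of]
    exact mem_top g
  induction hg using closure_induction_left with
  | one => exact ⟨[], List.isChain_nil, rfl⟩
  | mul_left _ ha _ _ ih =>
    obtain ⟨a, rfl⟩ := ha
    obtain ⟨l, hl, rfl⟩ := ih
    exact ⟨consReduce a l, reduced_consReduce a hl, (R_mul_word a l).symm⟩
  | inv_mul_cancel _ ha _ _ ih =>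
    obtain ⟨a, rfl⟩ := ha
    obtain ⟨l, hl, rfl⟩ := ih
    exact ⟨consReduce a l, reduced_consReduce a hl, by rw [R_inv, R_mul_word]⟩

lemma reduced_append_self {a c : Fin 3} {m : List (Fin 3)} (hl : Reduced (a :: (m ++ [c])))
    (hac : c ≠ a) : Reduced (a :: (m ++ [c]) ++ a :: (m ++ [c])) :=
  List.isChain_append.2 ⟨hl, hl, by simp [List.getLast?_cons, List.getLast?_append, hac]⟩

lemma conj_mul_self_eq_one_iff {G : Type*} [Group G] (g x : G) :
    (g⁻¹ * x * g) * (g⁻¹ * x * g) = 1 ↔ x * x = 1 := by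
  rw [show (g⁻¹ * x * g) * (g⁻¹ * x * g) = g⁻¹ * (x * x) * g⁻¹⁻¹ by group, conj_eq_one_iff]

/-- If the first and last letters of `l` differ then `l ++ l` is reduced, so `word l` cannot
square to `1`; otherwise peel both letters off. -/
theorem eq_one_or_conj_R_of_reduced : ∀ l : List (Fin 3), Reduced l → word l * word l = 1 →
    word l = 1 ∨ ∃ k g, word l = g⁻¹ * R k * g
  | [], _, _ => Or.inl rfl
  | a :: m, hl, hsq => by
    rcases m.eq_nil_or_concat' with rfl | ⟨core, c, rfl⟩
    · exact Or.inr ⟨a, 1, by simp⟩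
    obtain rfl | hca := eq_or_ne c a
    · have hword : word (c :: (core ++ [c])) = (R c)⁻¹ * word core * R c := by simp [mul_assoc]
      have hcore : word core * word core = 1 := by
        rwa [hword, conj_mul_self_eq_one_iff] at hsq
      rcases eq_one_or_conj_R_of_reduced core (hl.infix ⟨[c], [c], rfl⟩) hcore with h | ⟨k, g, hg⟩
      · simp [hword, h, R_mul_self]
      · exact Or.inr ⟨k, g * R c, by simp [hword, hg, mul_assoc]⟩
    · have := eq_nil_of_word_eq_one (reduced_append_self hl hca) (by rw [word_append, hsq])
      simp at this
termination_by l => l.length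

def letterParity (i : Fin 3) : Δ →* Multiplicative (ZMod 2) :=
  PresentedGroup.toGroup (f := fun k => Multiplicative.ofAdd (if k = i then 1 else 0)) <| by
    rintro _ ⟨k, rfl⟩
    rw [map_pow, FreeGroup.lift_apply_of, ← ofAdd_nsmul]
    split_ifs <;> rfl

lemma letterParity_R (i k : Fin 3) :
    letterParity i (R k) = Multiplicative.ofAdd (if k = i then 1 else 0) :=
  PresentedGroup.toGroup.of _

lemma exists_conj_R_of_mul_self_eq_one {i : Fin 3} {x : Δ} (hx : x * x = 1)
    (hi : letterParity i x ≠ 1) : ∃ g, x = g⁻¹ * R i * g := by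
  obtain ⟨l, hl, rfl⟩ := exists_reduced_word x
  rcases eq_one_or_conj_R_of_reduced l hl hx with h | ⟨k, g, hg⟩
  · simp [h] at hi
  · obtain rfl : k = i := by
      by_contra hki
      simp [hg, letterParity_R, hki] at hi
    exact ⟨g, hg⟩

lemma R_one_mem_Δ0 : R 1 ∈ Δ0 := subset_normalClosure (by simp)

lemma R_two_mem_Δ0 : R 2 ∈ Δ0 := subset_normalClosure (by simp)

lemma gens_subset_Δ0 : gens ⊆ Δ0 := by
  have : Δ0.Normal := normalClosure_normal
  rintro s (rfl | rfl | rfl | rfl)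
  · exact R_one_mem_Δ0
  · exact R_two_mem_Δ0
  · simpa using this.conj_mem _ R_one_mem_Δ0 (R 0)
  · simpa using this.conj_mem _ R_two_mem_Δ0 (R 0)

lemma mul_self_of_mem_gens {s : Δ} (hs : s ∈ gens) : s * s = 1 := by
  rcases hs with rfl | rfl | rfl | rfl <;> simp [mul_assoc, R_mul_self]

lemma conj_R_zero_image_gens : MulAut.conj (R 0) '' gens = gens := by
  ext x
  simp [gens, Set.image_insert_eq, mul_assoc, R_mul_self]
  tauto

lemma R_mem_normalizer_closure_gens (k : Fin 3) : R k ∈ normalizer (closure gens : Set Δ) := by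
  fin_cases k
  · exact normalizer_le_normalizer_closure _
      (mem_normalizer_iff_conj_image_eq.2 conj_R_zero_image_gens)
  · exact le_normalizer (subset_closure (by simp [gens]))
  · exact le_normalizer (subset_closure (by simp [gens]))

instance closure_gens_normal : (closure gens).Normal := by
  rw [← normalizer_eq_top_iff, eq_top_iff, ← PresentedGroup.closure_range_of, closure_le]
  rintro _ ⟨k, rfl⟩
  exact R_mem_normalizer_closure_gens k

lemma Δ0_le_closure_gens : Δ0 ≤ closure gens :=
  normalClosure_le_normal <|
    Set.pair_subset (Subgroup.subset_closure (by simp [gens]))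
      (Subgroup.subset_closure (by simp [gens]))

lemma exists_mem_gens_apply_ne_one {M : Type*} [Group M] {ψ : Δ0 →* M} (hψ : ψ ≠ 1) :
    ∃ s, ∃ hs : s ∈ gens, ψ ⟨s, gens_subset_Δ0 hs⟩ ≠ 1 := by
  by_contra! h
  have hker : Δ0 ≤ ψ.ker.map Δ0.subtype :=
    Δ0_le_closure_gens.trans <| closure_le _ |>.2 fun s hs => ⟨⟨s, gens_subset_Δ0 hs⟩, h s hs, rfl⟩
  refine hψ (MonoidHom.ext fun d => ?_)
  obtain ⟨e, he, hed⟩ := hker d.2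
  rw [Subtype.ext hed] at he
  exact he

theorem stmt16 (φ : Δ0 →* Δ) (hφ : Function.Surjective φ)
    (H : Subgroup Δ) (hH : ∃ i : Fin 3, ∃ c : Δ, c⁻¹ * R i * c ∈ H) :
    ∃ s ∈ gens, ∃ c ∈ Δ0, c⁻¹ * s * c ∈ preim φ H := by
  obtain ⟨i, c, hc⟩ := hH
  obtain ⟨d, hd⟩ := hφ (R i)
  have hψ : (letterParity i).comp φ ≠ 1 := fun h => by
    simpa [hd, letterParity_R] using DFunLike.congr_fun h d
  obtain ⟨s, hs, hψs⟩ := exists_mem_gens_apply_ne_one hψ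
  have hsq : φ ⟨s, gens_subset_Δ0 hs⟩ * φ ⟨s, gens_subset_Δ0 hs⟩ = 1 := by
    rw [← map_mul, ← map_one φ]
    exact congrArg φ (Subtype.ext (mul_self_of_mem_gens hs))
  obtain ⟨g, hg⟩ := exists_conj_R_of_mul_self_eq_one hsq hψs
  obtain ⟨e, he⟩ := hφ (g⁻¹ * c)
  refine ⟨s, hs, e, e.2, e⁻¹ * ⟨s, gens_subset_Δ0 hs⟩ * e, ?_, rfl⟩
  show φ _ ∈ H
  simpa [hg, he, mul_assoc] using hc
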